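/- arXiv:2502.12695 — 2 statements merged into one kernel-verified Lean document; each statement's English description precedes it below -/
import Mathlib

section
/- Let C be a category with binary coproducts, f : A → B any morphism, and ι : B → X a coproduct inclusion. If ι ∘ f is extensive and ι satisfies (E2), then f is extensive. -/
open CategoryTheory CategoryTheory.Limits

universe v u

variable {C : Type u} [Category.{v} C]

/-- `i₁ : X₁ ⟶ X` and `i₂ : X₂ ⟶ X` form a binary coproduct diagram. -/
def IsCoprodDiagram {X₁ X₂ X : C} (i₁ : X₁ ⟶ X) (i₂ : X₂ ⟶ X) : Prop :=
  Nonempty (IsColimit (BinaryCofan.mk i₁ i₂))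

/-- `p₁ : X ⟶ X₁` and `p₂ : X ⟶ X₂` form a binary product diagram. -/
def IsProdDiagram {X X₁ X₂ : C} (p₁ : X ⟶ X₁) (p₂ : X ⟶ X₂) : Prop :=
  Nonempty (IsLimit (BinaryFan.mk p₁ p₂))

/-- Condition (E1): pullbacks of `f` along both inclusions of any binary coproduct diagram
exist and the resulting legs form a binary coproduct diagram. -/
def SatE1 {A X : C} (f : A ⟶ X) : Prop :=
  ∀ {X₁ X₂ : C} (x₁ : X₁ ⟶ X) (x₂ : X₂ ⟶ X), IsCoprodDiagram x₁ x₂ →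
    ∃ (A₁ A₂ : C) (a₁ : A₁ ⟶ A) (a₂ : A₂ ⟶ A) (f₁ : A₁ ⟶ X₁) (f₂ : A₂ ⟶ X₂),
      IsPullback a₁ f₁ f x₁ ∧ IsPullback a₂ f₂ f x₂ ∧ IsCoprodDiagram a₁ a₂

/-- Condition (E2): in any commutative diagram over `f` whose rows are binary coproduct
diagrams, both squares are pullbacks. -/
def SatE2 {A X : C} (f : A ⟶ X) : Prop :=
  ∀ {A₁ A₂ X₁ X₂ : C} (a₁ : A₁ ⟶ A) (a₂ : A₂ ⟶ A) (x₁ : X₁ ⟶ X) (x₂ : X₂ ⟶ X)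
    (f₁ : A₁ ⟶ X₁) (f₂ : A₂ ⟶ X₂),
    a₁ ≫ f = f₁ ≫ x₁ → a₂ ≫ f = f₂ ≫ x₂ →
    IsCoprodDiagram x₁ x₂ → IsCoprodDiagram a₁ a₂ →
    IsPullback a₁ f₁ f x₁ ∧ IsPullback a₂ f₂ f x₂

/-- A morphism is extensive if it satisfies (E1) and (E2). -/
def Extensive {A X : C} (f : A ⟶ X) : Prop := SatE1 f ∧ SatE2 f

/-- Condition (C1): pushouts of `f` along both projections of any binary product diagram
exist and the resulting legs form a binary product diagram. -/
def SatC1 {A X : C} (f : A ⟶ X) : Prop :=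
  ∀ {A₁ A₂ : C} (p₁ : A ⟶ A₁) (p₂ : A ⟶ A₂), IsProdDiagram p₁ p₂ →
    ∃ (X₁ X₂ : C) (q₁ : X ⟶ X₁) (q₂ : X ⟶ X₂) (f₁ : A₁ ⟶ X₁) (f₂ : A₂ ⟶ X₂),
      IsPushout p₁ f f₁ q₁ ∧ IsPushout p₂ f f₂ q₂ ∧ IsProdDiagram q₁ q₂

/-- Condition (C2): in any commutative diagram over `f` whose rows are binary product
diagrams, both squares are pushouts. -/
def SatC2 {A X : C} (f : A ⟶ X) : Prop :=
  ∀ {A₁ A₂ X₁ X₂ : C} (p₁ : A ⟶ A₁) (p₂ : A ⟶ A₂) (q₁ : X ⟶ X₁) (q₂ : X ⟶ X₂)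
    (f₁ : A₁ ⟶ X₁) (f₂ : A₂ ⟶ X₂),
    p₁ ≫ f₁ = f ≫ q₁ → p₂ ≫ f₂ = f ≫ q₂ →
    IsProdDiagram p₁ p₂ → IsProdDiagram q₁ q₂ →
    IsPushout p₁ f f₁ q₁ ∧ IsPushout p₂ f f₂ q₂

/-- A morphism is coextensive if it satisfies (C1) and (C2). -/
def Coextensive {A X : C} (f : A ⟶ X) : Prop := SatC1 f ∧ SatC2 f

/-- A coproduct inclusion: a morphism admitting a complementary inclusion forming
a binary coproduct diagram. -/
def IsCoprodInclusion {A X : C} (ι : A ⟶ X) : Prop :=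
  ∃ (A' : C) (ι' : A' ⟶ X), IsCoprodDiagram ι ι'

/-- An extremal epimorphism: whenever `e = i ≫ m` with `m` a monomorphism, `m` is an
isomorphism. -/
def IsExtremalEpi {A B : C} (e : A ⟶ B) : Prop :=
  ∀ {I : C} (i : A ⟶ I) (m : I ⟶ B), Mono m → i ≫ m = e → IsIso m

/-- The binary strict refinement property for an object `X`. -/
def BinaryStrictRefinement (X : C) : Prop :=
  ∀ {A₁ A₂ B₁ B₂ : C} (a₁ : X ⟶ A₁) (a₂ : X ⟶ A₂) (b₁ : X ⟶ B₁) (b₂ : X ⟶ B₂),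
    IsProdDiagram a₁ a₂ → IsProdDiagram b₁ b₂ →
    ∃ (C₁₁ C₁₂ C₂₁ C₂₂ : C)
      (α₁₁ : A₁ ⟶ C₁₁) (α₁₂ : A₁ ⟶ C₁₂) (α₂₁ : A₂ ⟶ C₂₁) (α₂₂ : A₂ ⟶ C₂₂)
      (β₁₁ : B₁ ⟶ C₁₁) (β₁₂ : B₂ ⟶ C₁₂) (β₂₁ : B₁ ⟶ C₂₁) (β₂₂ : B₂ ⟶ C₂₂),
      a₁ ≫ α₁₁ = b₁ ≫ β₁₁ ∧ a₁ ≫ α₁₂ = b₂ ≫ β₁₂ ∧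
      a₂ ≫ α₂₁ = b₁ ≫ β₂₁ ∧ a₂ ≫ α₂₂ = b₂ ≫ β₂₂ ∧
      IsProdDiagram α₁₁ α₁₂ ∧ IsProdDiagram α₂₁ α₂₂ ∧
      IsProdDiagram β₁₁ β₂₁ ∧ IsProdDiagram β₁₂ β₂₂

/-- A jointly monomorphic pair which is a reflexive, symmetric and transitive relation. -/
def IsEquivalenceRelationPair {R X : C} (r₁ r₂ : R ⟶ X) : Prop :=
  (∀ {T : C} (a b : T ⟶ R), a ≫ r₁ = b ≫ r₁ → a ≫ r₂ = b ≫ r₂ → a = b) ∧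
  (∃ d : X ⟶ R, d ≫ r₁ = 𝟙 X ∧ d ≫ r₂ = 𝟙 X) ∧
  (∃ s : R ⟶ R, s ≫ r₁ = r₂ ∧ s ≫ r₂ = r₁) ∧
  (∀ {P : C} (p₁ p₂ : P ⟶ R), IsPullback p₁ p₂ r₂ r₁ →
    ∃ t : P ⟶ R, t ≫ r₁ = p₁ ≫ r₁ ∧ t ≫ r₂ = p₂ ≫ r₂)

/-!
Write `X = B ⨿ B'`. A decomposition `B = B₁ ⨿ B₂` yields `X = B₁ ⨿ (B₂ ⨿ B')`, and (E2) for `ι`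
makes `B₁` and `B₂` the pullbacks of `ι` along the two inclusions of this decomposition. By the
pasting law, pulling `f ≫ ι` back along those inclusions is the same as pulling `f` back along
`B₁ ⟶ B` and `B₂ ⟶ B`, so (E1) and (E2) descend from `f ≫ ι` to `f`.
-/

theorem isCoprodDiagram_iff_existsUnique {X₁ X₂ X : C} (i₁ : X₁ ⟶ X) (i₂ : X₂ ⟶ X) :
    IsCoprodDiagram i₁ i₂ ↔
      ∀ {T : C} (s₁ : X₁ ⟶ T) (s₂ : X₂ ⟶ T), ∃! m : X ⟶ T, i₁ ≫ m = s₁ ∧ i₂ ≫ m = s₂ := by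
  constructor
  · rintro ⟨h⟩ T s₁ s₂
    exact ⟨BinaryCofan.IsColimit.desc h s₁ s₂,
      ⟨BinaryCofan.IsColimit.inl_desc h s₁ s₂, BinaryCofan.IsColimit.inr_desc h s₁ s₂⟩,
      fun m hm => BinaryCofan.IsColimit.hom_ext h
        (hm.1.trans (BinaryCofan.IsColimit.inl_desc h s₁ s₂).symm)
        (hm.2.trans (BinaryCofan.IsColimit.inr_desc h s₁ s₂).symm)⟩
  · intro h
    choose desc hdesc huniq using @h
    exact ⟨BinaryCofan.IsColimit.mk _ desc (fun s₁ s₂ => (hdesc s₁ s₂).1)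
      (fun s₁ s₂ => (hdesc s₁ s₂).2) fun s₁ s₂ m h₁ h₂ => huniq s₁ s₂ m ⟨h₁, h₂⟩⟩

theorem IsCoprodDiagram.assoc {B₁ B₂ B B' X : C} {b₁ : B₁ ⟶ B} {b₂ : B₂ ⟶ B} {ι : B ⟶ X}
    {ι' : B' ⟶ X} [HasBinaryCoproduct B₂ B'] (hB : IsCoprodDiagram b₁ b₂)
    (hX : IsCoprodDiagram ι ι') : IsCoprodDiagram (b₁ ≫ ι) (coprod.desc (b₂ ≫ ι) ι') := by
  rw [isCoprodDiagram_iff_existsUnique] at hB hX ⊢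
  intro T s₁ s₂
  obtain ⟨u, ⟨hu₁, hu₂⟩, -⟩ := hB s₁ (coprod.inl ≫ s₂)
  obtain ⟨m, ⟨hm₁, hm₂⟩, -⟩ := hX u (coprod.inr ≫ s₂)
  refine ⟨m, ⟨by rw [Category.assoc, hm₁, hu₁], coprod.hom_ext ?_ ?_⟩, fun m' ⟨h₁, h₂⟩ => ?_⟩
  · rw [coprod.inl_desc_assoc, Category.assoc, hm₁, hu₂]
  · rw [coprod.inr_desc_assoc, hm₂]
  refine (hX u (coprod.inr ≫ s₂)).unique ⟨?_, ?_⟩ ⟨hm₁, hm₂⟩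
  · refine (hB s₁ (coprod.inl ≫ s₂)).unique ⟨?_, ?_⟩ ⟨hu₁, hu₂⟩
    · rw [← h₁, Category.assoc]
    · rw [← h₂, coprod.inl_desc_assoc, Category.assoc]
  · rw [← h₂, coprod.inr_desc_assoc]

theorem SatE2.isPullback_assoc {B₁ B₂ B B' X : C} {b₁ : B₁ ⟶ B} {b₂ : B₂ ⟶ B} {ι : B ⟶ X}
    {ι' : B' ⟶ X} [HasBinaryCoproduct B₂ B'] (hE2 : SatE2 ι) (hB : IsCoprodDiagram b₁ b₂)
    (hX : IsCoprodDiagram ι ι') :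
    IsPullback b₁ (𝟙 B₁) ι (b₁ ≫ ι) ∧ IsPullback b₂ coprod.inl ι (coprod.desc (b₂ ≫ ι) ι') :=
  hE2 b₁ b₂ _ _ _ _ (Category.id_comp _).symm (coprod.inl_desc _ _).symm (hB.assoc hX) hB

section

variable [HasBinaryCoproducts C] {A B B' X : C} {f : A ⟶ B} {ι : B ⟶ X} {ι' : B' ⟶ X}

theorem SatE1.of_comp (hX : IsCoprodDiagram ι ι') (hcomp : SatE1 (f ≫ ι)) (hE2 : SatE2 ι) :
    SatE1 f := by
  intro B₁ B₂ b₁ b₂ hB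
  obtain ⟨t₁, t₂⟩ := hE2.isPullback_assoc hB hX
  obtain ⟨A₁, A₂, a₁, a₂, g₁, g₂, s₁, s₂, hA⟩ := hcomp _ _ (hB.assoc hX)
  exact ⟨A₁, A₂, a₁, a₂, _, _, s₁.of_bot' t₁, s₂.of_bot' t₂, hA⟩

theorem SatE2.of_comp (hX : IsCoprodDiagram ι ι') (hcomp : SatE2 (f ≫ ι)) (hE2 : SatE2 ι) :
    SatE2 f := by
  intro A₁ A₂ B₁ B₂ a₁ a₂ b₁ b₂ f₁ f₂ w₁ w₂ hB hA
  obtain ⟨t₁, t₂⟩ := hE2.isPullback_assoc hB hX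
  obtain ⟨s₁, s₂⟩ := hcomp a₁ a₂ _ _ (f₁ ≫ 𝟙 B₁) (f₂ ≫ coprod.inl)
    (by rw [reassoc_of% w₁, Category.comp_id])
    (by rw [reassoc_of% w₂, Category.assoc, coprod.inl_desc])
    (hB.assoc hX) hA
  exact ⟨s₁.of_bot w₁ t₁, s₂.of_bot w₂ t₂⟩

end

/-- If `ι ≫ f` is extensive where `ι` is a coproduct inclusion satisfying (E2), then `f` is
extensive. -/
theorem extensive_of_inclusion_comp [HasBinaryCoproducts C] {A B X : C}
    (f : A ⟶ B) (ι : B ⟶ X) (hinc : IsCoprodInclusion ι)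
    (hcomp : Extensive (f ≫ ι)) (hE2 : SatE2 ι) : Extensive f := by
  obtain ⟨B', ι', hX⟩ := hinc
  exact ⟨SatE1.of_comp hX hcomp.1 hE2, SatE2.of_comp hX hcomp.2 hE2⟩
end

section
/- Let C be a category with finite products in which every binary product projection is a regular epimorphism, and let X be an object of C. Then every binary product projection with domain X is coextensive if and only if X satisfies the binary strict refinement property. -/
open CategoryTheory CategoryTheory.Limits

universe v u

variable {C : Type u} [Category.{v} C]

/-!
If `X ≅ T₁ × T₂ ≅ A × A'` and `A ≅ Q₁ × Q₂` compatibly, the square `X → T₁ → Q₁`, `X → A → Q₁`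
is a pushout: by associativity `p ≫ q₁ : X ⟶ Q₁` is itself a product projection, hence a regular
epimorphism, and every pair it identifies can be re-glued from its `T₁`- and `T₂`-components,
which is exactly what the universal property of the pushout needs. This gives (C2) for every
projection, and the strict refinement of two product decompositions of `X` supplies the diagram
whose squares (C2) turns into the pushouts required by (C1). Conversely, the four pushouts given
by (C1) for `a₁`, `a₂`, `b₁`, `b₂` assemble into a strict refinement, by uniqueness of pushouts.
-/

variable (C) in
def ProdProjectionsRegularEpi : Prop :=
  ∀ {P X₁ X₂ : C} (p₁ : P ⟶ X₁) (p₂ : P ⟶ X₂), IsProdDiagram p₁ p₂ → Nonempty (RegularEpi p₁)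

namespace IsProdDiagram

variable {X X₁ X₂ : C} {p₁ : X ⟶ X₁} {p₂ : X ⟶ X₂}

theorem symm (h : IsProdDiagram p₁ p₂) : IsProdDiagram p₂ p₁ :=
  ⟨BinaryFan.isLimitFlip h.some⟩

theorem hom_ext (h : IsProdDiagram p₁ p₂) {Z : C} {f g : Z ⟶ X}
    (h₁ : f ≫ p₁ = g ≫ p₁) (h₂ : f ≫ p₂ = g ≫ p₂) : f = g :=
  BinaryFan.IsLimit.hom_ext h.some h₁ h₂

theorem exists_lift (h : IsProdDiagram p₁ p₂) {Z : C} (f₁ : Z ⟶ X₁) (f₂ : Z ⟶ X₂) :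
    ∃ l : Z ⟶ X, l ≫ p₁ = f₁ ∧ l ≫ p₂ = f₂ :=
  ⟨_, BinaryFan.IsLimit.lift' h.some f₁ f₂ |>.2⟩

theorem comp_iso (h : IsProdDiagram p₁ p₂) {Y₁ Y₂ : C} (e₁ : X₁ ≅ Y₁) (e₂ : X₂ ≅ Y₂) :
    IsProdDiagram (p₁ ≫ e₁.hom) (p₂ ≫ e₂.hom) :=
  ⟨BinaryFan.isLimitCompRightIso _ e₂.hom (BinaryFan.isLimitCompLeftIso _ e₁.hom h.some)⟩

theorem epi_fst (hreg : ProdProjectionsRegularEpi C) (h : IsProdDiagram p₁ p₂) :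
    Epi p₁ :=
  (hreg p₁ p₂ h).some.epi

theorem exists_comp_fst [HasBinaryProducts C] {A A' Q₁ Q₂ : C} {p : X ⟶ A} {p' : X ⟶ A'}
    {q₁ : A ⟶ Q₁} {q₂ : A ⟶ Q₂} (hp : IsProdDiagram p p') (hq : IsProdDiagram q₁ q₂) :
    ∃ (R : C) (r : X ⟶ R), IsProdDiagram (p ≫ q₁) r :=
  ⟨_, _, ⟨IsLimit.assoc hq.some (prodIsProd Q₂ A') hp.some⟩⟩

theorem of_isPushout {B Y₁ Y₂ Y₁' Y₂' : C} {f : X ⟶ B} {i₁ : X₁ ⟶ Y₁} {i₂ : X₂ ⟶ Y₂}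
    {q₁ : B ⟶ Y₁} {q₂ : B ⟶ Y₂} {i₁' : X₁ ⟶ Y₁'} {i₂' : X₂ ⟶ Y₂'} {q₁' : B ⟶ Y₁'}
    {q₂' : B ⟶ Y₂'} (hq : IsProdDiagram q₁ q₂)
    (h₁ : IsPushout p₁ f i₁ q₁) (h₂ : IsPushout p₂ f i₂ q₂)
    (h₁' : IsPushout p₁ f i₁' q₁') (h₂' : IsPushout p₂ f i₂' q₂') :
    IsProdDiagram q₁' q₂' := by
  rw [← h₁.inr_isoIsPushout_hom _ _ h₁', ← h₂.inr_isoIsPushout_hom _ _ h₂']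
  exact hq.comp_iso _ _

end IsProdDiagram

theorem isPushout_of_regularEpi_comp {X T A Q : C} {t : X ⟶ T} {p : X ⟶ A} {g : T ⟶ Q}
    {q : A ⟶ Q} (w : t ≫ g = p ≫ q) [Epi t] [Epi p] (hpq : RegularEpi (p ≫ q))
    (hzigzag : ∀ {Z : C} (l r : Z ⟶ X), l ≫ p ≫ q = r ≫ p ≫ q →
      ∃ ψ : Z ⟶ X, ψ ≫ t = l ≫ t ∧ ψ ≫ p = r ≫ p) :
    IsPushout t p g q := by
  have : Epi q := have := hpq.epi; epi_of_epi p q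
  have hcoeq (s : PushoutCocone t p) : hpq.left ≫ p ≫ s.inr = hpq.right ≫ p ≫ s.inr := by
    obtain ⟨ψ, hψt, hψp⟩ := hzigzag hpq.left hpq.right (by simpa only [Category.assoc] using hpq.w)
    calc hpq.left ≫ p ≫ s.inr = ψ ≫ t ≫ s.inl := by rw [← s.condition, ← reassoc_of% hψt]
      _ = hpq.right ≫ p ≫ s.inr := by rw [s.condition, reassoc_of% hψp]
  let desc (s : PushoutCocone t p) : Q ⟶ s.pt := Cofork.IsColimit.desc hpq.isColimit _ (hcoeq s)
  have hdesc_inr (s : PushoutCocone t p) : q ≫ desc s = s.inr := by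
    rw [← cancel_epi p, ← Category.assoc]
    exact Cofork.IsColimit.π_desc' hpq.isColimit _ (hcoeq s)
  refine IsPushout.of_isColimit (PushoutCocone.IsColimit.mk w desc (fun s => ?_) hdesc_inr
    fun s m _ hm => by rw [← cancel_epi q, hdesc_inr, hm])
  rw [← cancel_epi t, reassoc_of% w, hdesc_inr, s.condition]

theorem isPushout_of_isProdDiagram [HasBinaryProducts C] (hreg : ProdProjectionsRegularEpi C)
    {X T₁ T₂ A A' Q₁ Q₂ : C} {t₁ : X ⟶ T₁} {t₂ : X ⟶ T₂} {p : X ⟶ A} {p' : X ⟶ A'}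
    {q₁ : A ⟶ Q₁} {q₂ : A ⟶ Q₂} {g₁ : T₁ ⟶ Q₁} {g₂ : T₂ ⟶ Q₂}
    (ht : IsProdDiagram t₁ t₂) (hp : IsProdDiagram p p') (hq : IsProdDiagram q₁ q₂)
    (w₁ : t₁ ≫ g₁ = p ≫ q₁) (w₂ : t₂ ≫ g₂ = p ≫ q₂) :
    IsPushout t₁ p g₁ q₁ := by
  have := ht.epi_fst hreg
  have := hp.epi_fst hreg
  obtain ⟨_, r, hpq⟩ := hp.exists_comp_fst hq
  refine isPushout_of_regularEpi_comp w₁ (hreg _ r hpq).some fun l r hlr => ?_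
  obtain ⟨ψ, hψ₁, hψ₂⟩ := ht.exists_lift (l ≫ t₁) (r ≫ t₂)
  refine ⟨ψ, hψ₁, hq.hom_ext ?_ ?_⟩
  · simp only [Category.assoc, ← w₁, reassoc_of% hψ₁]
    simpa only [Category.assoc, w₁] using hlr
  · simp only [Category.assoc, ← w₂, reassoc_of% hψ₂]

theorem satC2_of_isProdDiagram [HasBinaryProducts C] (hreg : ProdProjectionsRegularEpi C)
    {X A A' : C} {p : X ⟶ A} {p' : X ⟶ A'} (hp : IsProdDiagram p p') : SatC2 p :=
  fun _ _ _ _ _ _ w₁ w₂ ht hq =>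
    ⟨isPushout_of_isProdDiagram hreg ht hp hq w₁ w₂,
      isPushout_of_isProdDiagram hreg ht.symm hp hq.symm w₂ w₁⟩

theorem SatC2.satC1 {X A A' : C} {p : X ⟶ A} {p' : X ⟶ A'} (h : SatC2 p)
    (hX : BinaryStrictRefinement X) (hp : IsProdDiagram p p') : SatC1 p := by
  intro _ _ t₁ t₂ ht
  obtain ⟨C₁₁, -, C₂₁, -, α₁₁, -, α₂₁, -, β₁₁, -, β₂₁, -, w₁, -, w₂, -, -, -, hβ, -⟩ :=
    hX t₁ t₂ p p' ht hp
  obtain ⟨P₁, P₂⟩ := h t₁ t₂ β₁₁ β₂₁ α₁₁ α₂₁ w₁ w₂ ht hβ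
  exact ⟨C₁₁, C₂₁, β₁₁, β₂₁, α₁₁, α₂₁, P₁, P₂, hβ⟩

theorem binaryStrictRefinement_of_satC1 {X : C}
    (h : ∀ {A A' : C} (p : X ⟶ A) (p' : X ⟶ A'), IsProdDiagram p p' → SatC1 p) :
    BinaryStrictRefinement X := by
  intro _ _ _ _ a₁ a₂ b₁ b₂ ha hb
  obtain ⟨C₁₁, C₁₂, α₁₁, α₁₂, β₁₁, β₁₂, P₁₁, P₁₂, hα₁⟩ := h a₁ a₂ ha b₁ b₂ hb
  obtain ⟨C₂₁, C₂₂, α₂₁, α₂₂, β₂₁, β₂₂, P₂₁, P₂₂, hα₂⟩ := h a₂ a₁ ha.symm b₁ b₂ hb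
  obtain ⟨_, _, _, _, _, _, Q₁₁, Q₂₁, hβ₁⟩ := h b₁ b₂ hb a₁ a₂ ha
  obtain ⟨_, _, _, _, _, _, Q₁₂, Q₂₂, hβ₂⟩ := h b₂ b₁ hb.symm a₁ a₂ ha
  exact ⟨C₁₁, C₁₂, C₂₁, C₂₂, α₁₁, α₁₂, α₂₁, α₂₂, β₁₁, β₁₂, β₂₁, β₂₂,
    P₁₁.w.symm, P₁₂.w.symm, P₂₁.w.symm, P₂₂.w.symm, hα₁, hα₂,
    IsProdDiagram.of_isPushout hβ₁ Q₁₁ Q₂₁ P₁₁.flip P₂₁.flip,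
    IsProdDiagram.of_isPushout hβ₂ Q₁₂ Q₂₂ P₁₂.flip P₂₂.flip⟩

/-- If every binary product projection is a regular epimorphism, then all binary product
projections out of `X` are coextensive iff `X` has the binary strict refinement property. -/
theorem projections_coextensive_iff_binaryStrictRefinement [HasFiniteProducts C]
    (hproj : ∀ {P X₁ X₂ : C} (p₁ : P ⟶ X₁) (p₂ : P ⟶ X₂),
      IsProdDiagram p₁ p₂ → Nonempty (RegularEpi p₁) ∧ Nonempty (RegularEpi p₂))
    (X : C) :
    (∀ {A A' : C} (p : X ⟶ A) (p' : X ⟶ A'), IsProdDiagram p p' → Coextensive p) ↔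
      BinaryStrictRefinement X := by
  have hreg : ProdProjectionsRegularEpi C := fun p₁ p₂ h => (hproj p₁ p₂ h).1
  refine ⟨fun h => binaryStrictRefinement_of_satC1 fun p p' hp => (h p p' hp).1,
    fun hX _ _ p p' hp => ?_⟩
  have hC2 : SatC2 p := satC2_of_isProdDiagram hreg hp
  exact ⟨hC2.satC1 hX hp, hC2⟩
end
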